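/- Let X be an ordered Banach space with generating cone and Z a Banach lattice, with a positive J ∈ L(X, Z) and positive operators (R_n) ⊆ L(Z, X) such that R_n J → id_X in the weak operator topology. Then span(X'_+) is a monotonically complete Banach lattice with respect to a norm equivalent to the span norm: every increasing norm-bounded net in span(X'_+) has a supremum. -/

import Mathlib

open Filter Topology

/-- `f` is a positive functional with respect to the cone `P`. -/
def dualPos {X : Type*} [NormedAddCommGroup X] [NormedSpace ℝ X]
    (P : Set X) (f : X →L[ℝ] ℝ) : Prop := ∀ x ∈ P, 0 ≤ f x

/-- `f` lies in the span `X'₊ - X'₊` of the dual cone. -/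
def inDualSpan {X : Type*} [NormedAddCommGroup X] [NormedSpace ℝ X]
    (P : Set X) (f : X →L[ℝ] ℝ) : Prop :=
  ∃ g, dualPos P g ∧ ∃ h, dualPos P h ∧ f = g - h

/-- The dual order on `X'` induced by the cone `P ⊆ X`. -/
def dualLE {X : Type*} [NormedAddCommGroup X] [NormedSpace ℝ X]
    (P : Set X) (f g : X →L[ℝ] ℝ) : Prop := ∀ x ∈ P, f x ≤ g x

/-- The span norm on `span(X'₊)`. -/
noncomputable def dualSpanNorm {X : Type*} [NormedAddCommGroup X] [NormedSpace ℝ X]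
    (P : Set X) (f : X →L[ℝ] ℝ) : ℝ :=
  sInf {r : ℝ | ∃ g, dualPos P g ∧ ∃ h, dualPos P h ∧ f = g - h ∧ r = ‖g‖ + ‖h‖}

/-- `m` is the modulus (supremum of `±f`) of `f` within `span(X'₊)`. -/
def IsDualModulus {X : Type*} [NormedAddCommGroup X] [NormedSpace ℝ X]
    (P : Set X) (f m : X →L[ℝ] ℝ) : Prop :=
  dualPos P m ∧ dualLE P f m ∧ dualLE P (-f) m ∧
    ∀ u : X →L[ℝ] ℝ, inDualSpan P u → dualLE P f u → dualLE P (-f) u → dualLE P m u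

/-!
Write `f = g - h` with `g, h ∈ X'₊`. Each `f ∘ Rₙ` is then order bounded on the Banach lattice `Z`,
so it has a modulus `ρₙ ∈ Z'`, given on `Z₊` by the Riesz–Kantorovich formula
`ρₙ z = sup {f (Rₙ v) : |v| ≤ z}` (additive thanks to the Riesz decomposition property).
The positive functionals `ρₙ ∘ J` dominate `±f ∘ Rₙ ∘ J` on `X₊` and are dominated there by
`u ∘ Rₙ ∘ J` for every `u ≥ ±f`. They are norm bounded by Banach–Steinhaus, so by Banach–Alaoglu
they converge weak* along an ultrafilter; since `Rₙ J → id` weakly, the limit is the modulus of `f`.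
The same compactness argument produces the supremum of an increasing bounded net.

The lattice norm is `f ↦ sup {|f| x : x ∈ X₊, ‖x‖ ≤ 1}`. It is equivalent to the span norm because,
again by Banach–Steinhaus, `‖φ‖ ≤ C sup {φ x : x ∈ X₊, ‖x‖ ≤ 1}` for all `φ ∈ X'₊` when the cone
is generating.
-/

section LatticeGroup

open scoped Pointwise

variable {G : Type*} [AddCommGroup G] [Lattice G] [IsOrderedAddMonoid G]

theorem setOf_abs_le_add {y z : G} (hy : 0 ≤ y) (hz : 0 ≤ z) :
    {v : G | |v| ≤ y + z} = {v | |v| ≤ y} + {v | |v| ≤ z} := by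
  ext u
  refine ⟨fun hu => ?_, ?_⟩
  · obtain ⟨hu₁, hu₂⟩ := abs_le'.mp hu
    set v := (u ⊔ -y) ⊓ y
    have hvy : |v| ≤ y := abs_le'.mpr
      ⟨inf_le_right, neg_le.mp (le_inf le_sup_right ((neg_nonpos.mpr hy).trans hy))⟩
    have hvu : |u - v| ≤ z := by
      refine abs_le'.mpr ⟨?_, ?_⟩
      · rw [sub_le_comm]
        exact le_inf ((sub_le_self u hz).trans le_sup_left) (sub_le_iff_le_add.mpr hu₁)
      · rw [neg_sub, sub_le_iff_le_add]
        refine inf_le_left.trans (sup_le (le_add_of_nonneg_left hz) ?_)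
        calc -y = -(y + z) + z := by abel
          _ ≤ u + z := add_le_add_left (neg_le.mp hu₂) z
          _ = z + u := add_comm u z
    exact ⟨v, hvy, u - v, hvu, add_sub_cancel v u⟩
  · rintro ⟨v, hv, w, hw, rfl⟩
    exact (abs_add_le v w).trans (add_le_add hv hw)

theorem exists_addMonoidHom_eq_of_nonneg {H : Type*} [AddCommGroup H] (f : G → H)
    (hf : ∀ y z, 0 ≤ y → 0 ≤ z → f (y + z) = f y + f z) :
    ∃ F : G →+ H, ∀ z, 0 ≤ z → F z = f z := by
  have hf₀ : f 0 = 0 := by simpa using hf 0 0 le_rfl le_rfl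
  refine ⟨{ toFun := fun z => f z⁺ - f z⁻, map_zero' := by simp [hf₀], map_add' := fun a b => ?_ },
    fun z hz => by simp [posPart_eq_self.mpr hz, negPart_eq_zero.mpr hz, hf₀]⟩
  have key : (a + b)⁺ + (a⁻ + b⁻) = (a⁺ + b⁺) + (a + b)⁻ := by
    rw [← sub_eq_sub_iff_add_eq_add, posPart_sub_negPart, add_sub_add_comm,
      posPart_sub_negPart, posPart_sub_negPart]
  have hf' := congrArg f key
  simp only [hf _ _ (posPart_nonneg _) (add_nonneg (negPart_nonneg _) (negPart_nonneg _)),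
    hf _ _ (add_nonneg (posPart_nonneg _) (posPart_nonneg _)) (negPart_nonneg _),
    hf _ _ (posPart_nonneg _) (posPart_nonneg _),
    hf _ _ (negPart_nonneg _) (negPart_nonneg _)] at hf'
  show f (a + b)⁺ - f (a + b)⁻ = (f a⁺ - f a⁻) + (f b⁺ - f b⁻)
  rw [sub_add_sub_comm, sub_eq_sub_iff_add_eq_add, hf']

end LatticeGroup

section DualOrder

variable {X : Type*} [NormedAddCommGroup X] [NormedSpace ℝ X] {P : Set X}

theorem inDualSpan_of_dualPos {f : X →L[ℝ] ℝ} (hf : dualPos P f) : inDualSpan P f :=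
  ⟨f, hf, 0, fun _ _ => le_rfl, (sub_zero f).symm⟩

theorem abs_apply_le_of_dualLE {f u : X →L[ℝ] ℝ} (hu : dualLE P f u) (hu' : dualLE P (-f) u)
    {x : X} (hx : x ∈ P) : |f x| ≤ u x :=
  abs_le.mpr ⟨neg_le.mp (hu' x hx), hu x hx⟩

theorem dualPos_of_dualLE {f u : X →L[ℝ] ℝ} (hu : dualLE P f u) (hu' : dualLE P (-f) u) :
    dualPos P u :=
  fun _ hx => (abs_nonneg _).trans (abs_apply_le_of_dualLE hu hu' hx)

theorem dualLE_sub_add {g h : X →L[ℝ] ℝ} (hh : dualPos P h) : dualLE P (g - h) (g + h) :=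
  fun x hx => by
    have := hh x hx
    simp only [sub_apply, add_apply]
    linarith

theorem dualLE_neg_sub_add {g h : X →L[ℝ] ℝ} (hg : dualPos P g) : dualLE P (-(g - h)) (g + h) :=
  fun x hx => by
    have := hg x hx
    simp only [neg_apply, sub_apply,
      add_apply]
    linarith

theorem eq_of_dualLE_of_dualLE (hgen : ∀ x : X, ∃ y ∈ P, ∃ z ∈ P, x = y - z)
    {φ ψ : X →L[ℝ] ℝ} (h₁ : dualLE P φ ψ) (h₂ : dualLE P ψ φ) : φ = ψ := by
  ext x
  obtain ⟨y, hy, z, hz, rfl⟩ := hgen x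
  rw [map_sub, map_sub, le_antisymm (h₁ y hy) (h₂ y hy), le_antisymm (h₁ z hz) (h₂ z hz)]

theorem IsDualModulus.unique (hgen : ∀ x : X, ∃ y ∈ P, ∃ z ∈ P, x = y - z)
    {f m₁ m₂ : X →L[ℝ] ℝ} (h₁ : IsDualModulus P f m₁) (h₂ : IsDualModulus P f m₂) : m₁ = m₂ :=
  eq_of_dualLE_of_dualLE hgen (h₁.2.2.2 m₂ (inDualSpan_of_dualPos h₂.1) h₂.2.1 h₂.2.2.1)
    (h₂.2.2.2 m₁ (inDualSpan_of_dualPos h₁.1) h₁.2.1 h₁.2.2.1)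

theorem dualSpanNorm_le {f g h : X →L[ℝ] ℝ} (hg : dualPos P g) (hh : dualPos P h)
    (hf : f = g - h) : dualSpanNorm P f ≤ ‖g‖ + ‖h‖ :=
  csInf_le ⟨0, by rintro _ ⟨_, -, _, -, -, rfl⟩; positivity⟩ ⟨g, hg, h, hh, hf, rfl⟩

theorem opNorm_le_dualSpanNorm {f : X →L[ℝ] ℝ} (hf : inDualSpan P f) :
    ‖f‖ ≤ dualSpanNorm P f := by
  obtain ⟨g, hg, h, hh, hfe⟩ := hf
  refine le_csInf ⟨_, g, hg, h, hh, hfe, rfl⟩ ?_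
  rintro _ ⟨g', -, h', -, rfl, rfl⟩
  exact norm_sub_le g' h'

end DualOrder

section RieszKantorovich

open scoped Pointwise

variable {Z : Type*} [NormedAddCommGroup Z] [Lattice Z] [IsOrderedAddMonoid Z] [NormedSpace ℝ Z]

theorem apply_le_of_abs_le {φ w : Z →L[ℝ] ℝ} (hw : ∀ z, 0 ≤ z → |φ z| ≤ w z) {v z : Z}
    (hvz : |v| ≤ z) : φ v ≤ w z := by
  have hv₁ := abs_le.mp (hw _ (posPart_nonneg v))
  have hv₂ := abs_le.mp (hw _ (negPart_nonneg v))
  have hw_mono := (abs_nonneg _).trans (hw _ (sub_nonneg.mpr hvz))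
  rw [map_sub] at hw_mono
  calc φ v = φ v⁺ - φ v⁻ := by rw [← map_sub, posPart_sub_negPart]
    _ ≤ w v⁺ + w v⁻ := by linarith
    _ = w |v| := by rw [← map_add, posPart_add_negPart]
    _ ≤ w z := by linarith

/-- The Riesz–Kantorovich formula for the modulus of `φ`, meaningful only for `0 ≤ z`. -/
noncomputable def rieszKantorovich (φ : Z →L[ℝ] ℝ) (z : Z) : ℝ :=
  sSup (φ '' {v | |v| ≤ z})

theorem image_abs_le_nonempty (φ : Z →L[ℝ] ℝ) {z : Z} (hz : 0 ≤ z) :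
    (φ '' {v | |v| ≤ z}).Nonempty :=
  ⟨φ 0, 0, by simpa using hz, rfl⟩

theorem bddAbove_image_abs_le {φ w : Z →L[ℝ] ℝ} (hw : ∀ z, 0 ≤ z → |φ z| ≤ w z) (z : Z) :
    BddAbove (φ '' {v | |v| ≤ z}) :=
  ⟨w z, Set.forall_mem_image.mpr fun _ hv => apply_le_of_abs_le hw hv⟩

theorem le_rieszKantorovich {φ w : Z →L[ℝ] ℝ} (hw : ∀ z, 0 ≤ z → |φ z| ≤ w z) {v z : Z}
    (hvz : |v| ≤ z) : φ v ≤ rieszKantorovich φ z :=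
  le_csSup (bddAbove_image_abs_le hw z) ⟨v, hvz, rfl⟩

theorem rieszKantorovich_le {φ u : Z →L[ℝ] ℝ} (hu : ∀ z, 0 ≤ z → |φ z| ≤ u z) {z : Z}
    (hz : 0 ≤ z) : rieszKantorovich φ z ≤ u z :=
  csSup_le (image_abs_le_nonempty φ hz)
    (Set.forall_mem_image.mpr fun _ hv => apply_le_of_abs_le hu hv)

theorem rieszKantorovich_add {φ w : Z →L[ℝ] ℝ} (hw : ∀ z, 0 ≤ z → |φ z| ≤ w z) {y z : Z}
    (hy : 0 ≤ y) (hz : 0 ≤ z) :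
    rieszKantorovich φ (y + z) = rieszKantorovich φ y + rieszKantorovich φ z := by
  rw [rieszKantorovich, setOf_abs_le_add hy hz, Set.image_add,
    csSup_add (image_abs_le_nonempty φ hy) (bddAbove_image_abs_le hw y)
      (image_abs_le_nonempty φ hz) (bddAbove_image_abs_le hw z)]
  rfl

theorem exists_isDualModulus_Ici [HasSolidNorm Z] {φ : Z →L[ℝ] ℝ} (hφ : inDualSpan (Set.Ici 0) φ) :
    ∃ ρ, IsDualModulus (Set.Ici 0) φ ρ := by
  obtain ⟨a, ha, b, hb, rfl⟩ := hφ
  have hw : ∀ z, 0 ≤ z → |(a - b) z| ≤ (a + b) z := fun z hz =>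
    abs_apply_le_of_dualLE (dualLE_sub_add hb) (dualLE_neg_sub_add ha) hz
  obtain ⟨F, hF⟩ := exists_addMonoidHom_eq_of_nonneg (rieszKantorovich (a - b))
    fun y z hy hz => rieszKantorovich_add hw hy hz
  have hF_nonneg : ∀ z, 0 ≤ z → 0 ≤ F z := fun z hz => by
    simpa [hF z hz] using le_rieszKantorovich hw (v := 0) (by simpa using hz)
  have hF_bound : ∀ z, ‖F z‖ ≤ ‖a + b‖ * ‖z‖ := fun z => by
    have hF_abs : F |z| ≤ (a + b) |z| := (hF _ (abs_nonneg z)).trans_le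
      (rieszKantorovich_le hw (abs_nonneg z))
    calc ‖F z‖ = |F z⁺ - F z⁻| := by rw [← map_sub, posPart_sub_negPart, Real.norm_eq_abs]
      _ ≤ F z⁺ + F z⁻ := by
        have := hF_nonneg _ (posPart_nonneg z)
        have := hF_nonneg _ (negPart_nonneg z)
        exact abs_sub_le_iff.mpr ⟨by linarith, by linarith⟩
      _ = F |z| := by rw [← map_add, posPart_add_negPart]
      _ ≤ ‖(a + b) |z|‖ := hF_abs.trans (le_abs_self _)
      _ ≤ ‖a + b‖ * ‖z‖ := by simpa [norm_abs_eq_norm] using (a + b).le_opNorm |z|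
  refine ⟨F.toRealLinearMap (AddMonoidHomClass.continuous_of_bound F _ hF_bound), hF_nonneg,
    fun z hz => ?_, fun z hz => ?_, fun u _ hu hu' z hz => ?_⟩
  · exact (le_rieszKantorovich hw (abs_of_nonneg hz).le).trans_eq (hF z hz).symm
  · rw [neg_apply, ← map_neg]
    exact (le_rieszKantorovich hw (v := -z) (by rw [abs_neg, abs_of_nonneg hz])).trans_eq
      (hF z hz).symm
  · exact (hF z hz).trans_le (rieszKantorovich_le (fun y hy => abs_apply_le_of_dualLE hu hu' hy) hz)

end RieszKantorovich

section Compactness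

variable {X : Type*} [NormedAddCommGroup X] [NormedSpace ℝ X] {P : Set X}

theorem exists_norm_le_of_dualPos [CompleteSpace X]
    (hgen : ∀ x : X, ∃ y ∈ P, ∃ z ∈ P, x = y - z) {ι : Type*} {m : ι → X →L[ℝ] ℝ}
    (hpos : ∀ i, dualPos P (m i)) (hbdd : ∀ x ∈ P, BddAbove (Set.range fun i => m i x)) :
    ∃ r, ∀ i, ‖m i‖ ≤ r := by
  refine banach_steinhaus fun x => ?_
  obtain ⟨y, hy, z, hz, rfl⟩ := hgen x
  obtain ⟨By, hBy⟩ := hbdd y hy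
  obtain ⟨Bz, hBz⟩ := hbdd z hz
  refine ⟨By + Bz, fun i => ?_⟩
  rw [map_sub, Real.norm_eq_abs, abs_le]
  constructor <;> linarith [hpos i y hy, hpos i z hz, hBy ⟨i, rfl⟩, hBz ⟨i, rfl⟩]

theorem exists_tendsto_ultrafilter_of_norm_le {ι : Type*} (U : Ultrafilter ι)
    {m : ι → X →L[ℝ] ℝ} {r : ℝ} (hr : ∀ i, ‖m i‖ ≤ r) :
    ∃ m₀ : X →L[ℝ] ℝ, ∀ x, Tendsto (fun i => m i x) U (𝓝 (m₀ x)) := by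
  obtain ⟨ψ, -, hψ⟩ := (WeakDual.isCompact_closedBall (0 : StrongDual ℝ X) r).ultrafilter_le_nhds
    (U.map fun i => StrongDual.toWeakDual (m i))
    (by
      rw [Ultrafilter.coe_map, le_principal_iff]
      exact mem_map.mpr (Eventually.of_forall fun i => by simpa using hr i))
  rw [Ultrafilter.coe_map] at hψ
  exact ⟨WeakDual.toStrongDual ψ, fun x => ((WeakDual.eval_continuous x).tendsto ψ).comp hψ⟩

end Compactness

theorem exists_isDualModulus {X Z : Type*} [NormedAddCommGroup X] [NormedSpace ℝ X]
    [CompleteSpace X] [NormedAddCommGroup Z] [Lattice Z] [IsOrderedAddMonoid Z] [HasSolidNorm Z]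
    [NormedSpace ℝ Z] {P : Set X} (hgen : ∀ x : X, ∃ y ∈ P, ∃ z ∈ P, x = y - z)
    {J : X →L[ℝ] Z} (hJ : ∀ x ∈ P, 0 ≤ J x)
    {R : ℕ → Z →L[ℝ] X} (hR : ∀ n, ∀ z : Z, 0 ≤ z → R n z ∈ P)
    (hWOT : ∀ (x : X) (φ : X →L[ℝ] ℝ), Tendsto (fun n => φ (R n (J x))) atTop (𝓝 (φ x)))
    {f : X →L[ℝ] ℝ} (hf : inDualSpan P f) : ∃ m, IsDualModulus P f m := by
  obtain ⟨g, hg, h, hh, rfl⟩ := hf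
  have hcomp : ∀ n, inDualSpan (Set.Ici 0) ((g - h).comp (R n)) := fun n =>
    ⟨g.comp (R n), fun z hz => hg _ (hR n z hz), h.comp (R n), fun z hz => hh _ (hR n z hz),
      ContinuousLinearMap.sub_comp g h (R n)⟩
  choose ρ hρ using fun n => exists_isDualModulus_Ici (hcomp n)
  set m : ℕ → X →L[ℝ] ℝ := fun n => (ρ n).comp J
  have hm_pos : ∀ n, dualPos P (m n) := fun n x hx => (hρ n).1 _ (hJ x hx)
  have hm_le : ∀ u, dualLE P (g - h) u → dualLE P (-(g - h)) u →
      ∀ n, ∀ x ∈ P, m n x ≤ u (R n (J x)) := fun u hu hu' n x hx =>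
    (hρ n).2.2.2 (u.comp (R n))
      (inDualSpan_of_dualPos fun z hz => dualPos_of_dualLE hu hu' _ (hR n z hz))
      (fun z hz => hu _ (hR n z hz)) (fun z hz => hu' _ (hR n z hz)) _ (hJ x hx)
  obtain ⟨r, hr⟩ := exists_norm_le_of_dualPos hgen hm_pos fun x hx =>
    BddAbove.range_mono _ (fun n => hm_le _ (dualLE_sub_add hh) (dualLE_neg_sub_add hg) n x hx)
      (hWOT x (g + h)).bddAbove_range
  set U := Ultrafilter.of (atTop : Filter ℕ)
  have hWOT_U : ∀ x (φ : X →L[ℝ] ℝ), Tendsto (fun n => φ (R n (J x))) U (𝓝 (φ x)) :=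
    fun x φ => (hWOT x φ).mono_left (Ultrafilter.of_le _)
  obtain ⟨m₀, hm₀⟩ := exists_tendsto_ultrafilter_of_norm_le U hr
  refine ⟨m₀, fun x hx => ?_, fun x hx => ?_, fun x hx => ?_, fun u _ hu hu' x hx => ?_⟩
  · exact ge_of_tendsto' (hm₀ x) fun n => hm_pos n x hx
  · exact le_of_tendsto_of_tendsto' (hWOT_U x _) (hm₀ x) fun n => (hρ n).2.1 _ (hJ x hx)
  · exact le_of_tendsto_of_tendsto' (hWOT_U x _) (hm₀ x) fun n => (hρ n).2.2.1 _ (hJ x hx)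
  · exact le_of_tendsto_of_tendsto' (hm₀ x) (hWOT_U x u) fun n => hm_le u hu hu' n x hx

theorem exists_sup_of_monotone {X : Type*} [NormedAddCommGroup X] [NormedSpace ℝ X] {P : Set X}
    {ι : Type*} [Nonempty ι] [SemilatticeSup ι] (g : ι → X →L[ℝ] ℝ)
    (hpos : ∀ i, dualPos P (g i)) (hmono : ∀ i j, i ≤ j → dualLE P (g i) (g j))
    (hbdd : ∃ b : ℝ, ∀ i, dualSpanNorm P (g i) ≤ b) :
    ∃ s : X →L[ℝ] ℝ, inDualSpan P s ∧ (∀ i, dualLE P (g i) s) ∧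
      ∀ u : X →L[ℝ] ℝ, inDualSpan P u → (∀ i, dualLE P (g i) u) → dualLE P s u := by
  obtain ⟨b, hb⟩ := hbdd
  obtain ⟨s, hs⟩ := exists_tendsto_ultrafilter_of_norm_le (Ultrafilter.of (atTop : Filter ι))
    fun i => (opNorm_le_dualSpanNorm (inDualSpan_of_dualPos (hpos i))).trans (hb i)
  refine ⟨s, inDualSpan_of_dualPos fun x hx => ge_of_tendsto' (hs x) fun i => hpos i x hx,
    fun i x hx => ge_of_tendsto (hs x) ?_,
    fun u _ hu x hx => le_of_tendsto' (hs x) fun i => hu i x hx⟩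
  exact Ultrafilter.of_le _ ((eventually_ge_atTop i).mono fun j hij => hmono i j hij x hx)

section ConeNorm

variable {X : Type*} [NormedAddCommGroup X] [NormedSpace ℝ X] {P : Set X}

noncomputable def coneNorm (P : Set X) (φ : X →L[ℝ] ℝ) : ℝ :=
  sSup (φ '' (P ∩ Metric.closedBall 0 1))

theorem bddAbove_image_cone_closedBall (φ : X →L[ℝ] ℝ) :
    BddAbove (φ '' (P ∩ Metric.closedBall 0 1)) :=
  ⟨‖φ‖, Set.forall_mem_image.mpr fun x hx => (le_abs_self _).trans
    (φ.unit_le_opNorm x (mem_closedBall_zero_iff.mp hx.2))⟩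

theorem le_coneNorm (φ : X →L[ℝ] ℝ) {x : X} (hx : x ∈ P) (hx₁ : ‖x‖ ≤ 1) : φ x ≤ coneNorm P φ :=
  le_csSup (bddAbove_image_cone_closedBall φ) ⟨x, ⟨hx, mem_closedBall_zero_iff.mpr hx₁⟩, rfl⟩

theorem coneNorm_nonneg (h₀ : (0 : X) ∈ P) (φ : X →L[ℝ] ℝ) : 0 ≤ coneNorm P φ := by
  simpa using le_coneNorm φ h₀ (by simp)

theorem coneNorm_le_opNorm (φ : X →L[ℝ] ℝ) : coneNorm P φ ≤ ‖φ‖ :=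
  Real.sSup_le (Set.forall_mem_image.mpr fun x hx => (le_abs_self _).trans
    (φ.unit_le_opNorm x (mem_closedBall_zero_iff.mp hx.2))) (norm_nonneg φ)

theorem coneNorm_mono (h₀ : (0 : X) ∈ P) {φ ψ : X →L[ℝ] ℝ} (h : dualLE P φ ψ) :
    coneNorm P φ ≤ coneNorm P ψ :=
  csSup_le ⟨φ 0, 0, ⟨h₀, by simp⟩, rfl⟩ (Set.forall_mem_image.mpr fun x hx =>
    (h x hx.1).trans (le_coneNorm ψ hx.1 (mem_closedBall_zero_iff.mp hx.2)))

theorem apply_le_coneNorm_mul_norm (hPsmul : ∀ (a : ℝ), 0 ≤ a → ∀ x ∈ P, a • x ∈ P)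
    (φ : X →L[ℝ] ℝ) {x : X} (hx : x ∈ P) : φ x ≤ coneNorm P φ * ‖x‖ := by
  rcases eq_or_ne x 0 with rfl | hx₀
  · simp
  have hnorm : 0 < ‖x‖ := norm_pos_iff.mpr hx₀
  have h := le_coneNorm φ (hPsmul _ (inv_nonneg.mpr hnorm.le) x hx)
    (by rw [norm_smul, norm_inv, norm_norm, inv_mul_cancel₀ hnorm.ne'])
  rw [map_smul, smul_eq_mul, inv_mul_le_iff₀ hnorm] at h
  linarith

theorem exists_norm_le_mul_coneNorm [CompleteSpace X] (h₀ : (0 : X) ∈ P)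
    (hPsmul : ∀ (a : ℝ), 0 ≤ a → ∀ x ∈ P, a • x ∈ P)
    (hgen : ∀ x : X, ∃ y ∈ P, ∃ z ∈ P, x = y - z) :
    ∃ C > 0, ∀ φ, dualPos P φ → ‖φ‖ ≤ C * coneNorm P φ := by
  obtain ⟨r, hr⟩ := exists_norm_le_of_dualPos hgen
    (m := fun φ : {φ : X →L[ℝ] ℝ // dualPos P φ ∧ ∀ x ∈ P, φ x ≤ ‖x‖} => φ.1)
    (fun φ => φ.2.1) fun x hx => ⟨‖x‖, by rintro _ ⟨φ, rfl⟩; exact φ.2.2 x hx⟩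
  refine ⟨max r 1, by positivity, fun φ hφ => ?_⟩
  rcases (coneNorm_nonneg h₀ φ).eq_or_lt with hc | hc
  · have : φ = 0 := eq_of_dualLE_of_dualLE hgen
      (fun x hx => by simpa [← hc] using apply_le_coneNorm_mul_norm hPsmul φ hx) hφ
    rw [← hc, mul_zero, this, norm_zero]
  set c := coneNorm P φ
  have hpos : dualPos P (c⁻¹ • φ) := fun x hx => by
    simpa using mul_nonneg (inv_nonneg.mpr hc.le) (hφ x hx)
  have hle : ∀ x ∈ P, (c⁻¹ • φ) x ≤ ‖x‖ := fun x hx => by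
    simpa [inv_mul_le_iff₀ hc] using apply_le_coneNorm_mul_norm hPsmul φ hx
  have hscaled : ‖c⁻¹ • φ‖ ≤ r := hr ⟨c⁻¹ • φ, hpos, hle⟩
  rw [norm_smul, norm_inv, Real.norm_of_nonneg hc.le, inv_mul_le_iff₀ hc] at hscaled
  nlinarith [le_max_left r 1]

end ConeNorm

section LatticeNorm

variable {X : Type*} [NormedAddCommGroup X] [NormedSpace ℝ X] {P : Set X}

open Classical in
noncomputable def dualModulus (P : Set X) (f : X →L[ℝ] ℝ) : X →L[ℝ] ℝ :=
  if h : ∃ m, IsDualModulus P f m then h.choose else 0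

theorem dualModulus_eq (hgen : ∀ x : X, ∃ y ∈ P, ∃ z ∈ P, x = y - z) {f m : X →L[ℝ] ℝ}
    (hm : IsDualModulus P f m) : dualModulus P f = m := by
  have hex : ∃ m, IsDualModulus P f m := ⟨m, hm⟩
  rw [dualModulus, dif_pos hex]
  exact hex.choose_spec.unique hgen hm

theorem coneNorm_le_dualSpanNorm (h₀ : (0 : X) ∈ P) {f m : X →L[ℝ] ℝ} (hf : inDualSpan P f)
    (hm : IsDualModulus P f m) : coneNorm P m ≤ dualSpanNorm P f := by
  obtain ⟨g, hg, h, hh, hfe⟩ := hf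
  refine le_csInf ⟨_, g, hg, h, hh, hfe, rfl⟩ ?_
  rintro _ ⟨g', hg', h', hh', rfl, rfl⟩
  have hm_le : dualLE P m (g' + h') := hm.2.2.2 _
    (inDualSpan_of_dualPos fun x hx => add_nonneg (hg' x hx) (hh' x hx))
    (dualLE_sub_add hh') (dualLE_neg_sub_add hg')
  calc coneNorm P m ≤ coneNorm P (g' + h') := coneNorm_mono h₀ hm_le
    _ ≤ ‖g' + h'‖ := coneNorm_le_opNorm _
    _ ≤ ‖g'‖ + ‖h'‖ := norm_add_le g' h'

theorem dualSpanNorm_le_coneNorm (h₀ : (0 : X) ∈ P) {C : ℝ} (hC₀ : 0 ≤ C)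
    (hC : ∀ φ, dualPos P φ → ‖φ‖ ≤ C * coneNorm P φ) {f m : X →L[ℝ] ℝ}
    (hm : IsDualModulus P f m) : dualSpanNorm P f ≤ 2 * C * coneNorm P m := by
  obtain ⟨-, hfm, hfm', -⟩ := hm
  set p := (1 / 2 : ℝ) • (m + f)
  set q := (1 / 2 : ℝ) • (m - f)
  have hp : dualPos P p := fun x hx => by
    have := hfm' x hx
    simp only [p, smul_apply, add_apply, neg_apply, smul_eq_mul] at this ⊢
    linarith
  have hq : dualPos P q := fun x hx => by
    have := hfm x hx
    simp only [q, smul_apply, sub_apply, smul_eq_mul] at this ⊢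
    linarith
  have hpm : dualLE P p m := fun x hx => by
    have := hfm x hx
    simp only [p, smul_apply, add_apply, smul_eq_mul] at this ⊢
    linarith
  have hqm : dualLE P q m := fun x hx => by
    have := hfm' x hx
    simp only [q, smul_apply, sub_apply, neg_apply, smul_eq_mul] at this ⊢
    linarith
  calc dualSpanNorm P f ≤ ‖p‖ + ‖q‖ := dualSpanNorm_le hp hq (by ext; simp [p, q]; ring)
    _ ≤ C * coneNorm P p + C * coneNorm P q := add_le_add (hC p hp) (hC q hq)
    _ ≤ C * coneNorm P m + C * coneNorm P m := by
      gcongr <;> exact coneNorm_mono h₀ ‹_›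
    _ = 2 * C * coneNorm P m := by ring

theorem exists_latticeNorm_equiv_dualSpanNorm [CompleteSpace X] (h₀ : (0 : X) ∈ P)
    (hPsmul : ∀ (a : ℝ), 0 ≤ a → ∀ x ∈ P, a • x ∈ P)
    (hgen : ∀ x : X, ∃ y ∈ P, ∃ z ∈ P, x = y - z)
    (hmod : ∀ f : X →L[ℝ] ℝ, inDualSpan P f → ∃ m, IsDualModulus P f m) :
    ∃ N : (X →L[ℝ] ℝ) → ℝ, ∃ c₁ > (0 : ℝ), ∃ c₂ > (0 : ℝ),
      (∀ f, inDualSpan P f →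
        c₁ * dualSpanNorm P f ≤ N f ∧ N f ≤ c₂ * dualSpanNorm P f) ∧
      (∀ f g mf mg, inDualSpan P f → inDualSpan P g →
        IsDualModulus P f mf → IsDualModulus P g mg → dualLE P mf mg → N f ≤ N g) := by
  obtain ⟨C, hC₀, hC⟩ := exists_norm_le_mul_coneNorm h₀ hPsmul hgen
  refine ⟨fun f => coneNorm P (dualModulus P f), 1 / (2 * C), by positivity, 1, one_pos,
    fun f hf => ?_, fun f g mf mg _ _ hmf hmg hle => ?_⟩
  · obtain ⟨m, hm⟩ := hmod f hf
    simp only [dualModulus_eq hgen hm]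
    rw [one_div, inv_mul_le_iff₀ (by positivity), one_mul]
    exact ⟨dualSpanNorm_le_coneNorm h₀ hC₀.le hC hm, coneNorm_le_dualSpanNorm h₀ hf hm⟩
  · simp only [dualModulus_eq hgen hmf, dualModulus_eq hgen hmg]
    exact coneNorm_mono h₀ hle

end LatticeNorm

theorem stmt10_general {X Z : Type*}
    [NormedAddCommGroup X] [NormedSpace ℝ X] [CompleteSpace X]
    [NormedAddCommGroup Z] [Lattice Z] [IsOrderedAddMonoid Z] [HasSolidNorm Z] [NormedSpace ℝ Z]
    (P : Set X)
    (hPsmul : ∀ (a : ℝ), 0 ≤ a → ∀ x ∈ P, a • x ∈ P)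
    (hgen : ∀ x : X, ∃ y ∈ P, ∃ z ∈ P, x = y - z)
    (J : X →L[ℝ] Z) (hJ : ∀ x ∈ P, 0 ≤ J x)
    (R : ℕ → Z →L[ℝ] X) (hR : ∀ n, ∀ z : Z, 0 ≤ z → R n z ∈ P)
    (hWOT : ∀ (x : X) (φ : X →L[ℝ] ℝ),
      Tendsto (fun n => φ (R n (J x))) atTop (𝓝 (φ x))) :
    -- `span(X'₊)` is a vector lattice:
    (∀ f : X →L[ℝ] ℝ, inDualSpan P f → ∃ m, IsDualModulus P f m) ∧
    -- there is a lattice norm equivalent to the span norm: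
    (∃ N : (X →L[ℝ] ℝ) → ℝ, ∃ c₁ > (0 : ℝ), ∃ c₂ > (0 : ℝ),
      (∀ f, inDualSpan P f →
        c₁ * dualSpanNorm P f ≤ N f ∧ N f ≤ c₂ * dualSpanNorm P f) ∧
      (∀ f g mf mg, inDualSpan P f → inDualSpan P g →
        IsDualModulus P f mf → IsDualModulus P g mg → dualLE P mf mg → N f ≤ N g)) ∧
    -- monotone completeness: increasing span-norm-bounded nets in `X'₊` have suprema:
    (∀ (ι : Type) [Nonempty ι] [SemilatticeSup ι] (g : ι → X →L[ℝ] ℝ),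
      (∀ i, dualPos P (g i)) →
      (∀ i j, i ≤ j → dualLE P (g i) (g j)) →
      (∃ b : ℝ, ∀ i, dualSpanNorm P (g i) ≤ b) →
      ∃ s : X →L[ℝ] ℝ, inDualSpan P s ∧ (∀ i, dualLE P (g i) s) ∧
        ∀ u : X →L[ℝ] ℝ, inDualSpan P u → (∀ i, dualLE P (g i) u) → dualLE P s u) := by
  have h₀ : (0 : X) ∈ P := by
    obtain ⟨y, hy, -⟩ := hgen 0
    simpa using hPsmul 0 le_rfl y hy
  have hmod : ∀ f : X →L[ℝ] ℝ, inDualSpan P f → ∃ m, IsDualModulus P f m :=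
    fun f => exists_isDualModulus hgen hJ hR hWOT
  exact ⟨hmod, exists_latticeNorm_equiv_dualSpanNorm h₀ hPsmul hgen hmod,
    fun ι _ _ g => exists_sup_of_monotone g⟩

/-- Let `X` be an ordered Banach space with generating (closed) cone `P` and
`Z` a Banach lattice, with positive `J : X → Z` and positive `(Rₙ) : Z → X` such that
`Rₙ J → id_X` in the weak operator topology. Then `span(X'₊)` is a monotonically complete
Banach lattice with respect to a norm equivalent to the span norm: it is a vector lattice,
carries an equivalent lattice norm, and every increasing norm-bounded net in its positive
cone has a supremum. -/
theorem stmt10 {X Z : Type*}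
    [NormedAddCommGroup X] [NormedSpace ℝ X] [CompleteSpace X]
    [NormedAddCommGroup Z] [Lattice Z] [IsOrderedAddMonoid Z] [HasSolidNorm Z] [NormedSpace ℝ Z] [CompleteSpace Z]
    (P : Set X) (hPclosed : IsClosed P)
    (hPadd : ∀ x ∈ P, ∀ y ∈ P, x + y ∈ P)
    (hPsmul : ∀ (a : ℝ), 0 ≤ a → ∀ x ∈ P, a • x ∈ P)
    (hPpointed : ∀ x ∈ P, -x ∈ P → x = 0)
    (hgen : ∀ x : X, ∃ y ∈ P, ∃ z ∈ P, x = y - z)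
    (J : X →L[ℝ] Z) (hJ : ∀ x ∈ P, 0 ≤ J x)
    (R : ℕ → Z →L[ℝ] X) (hR : ∀ n, ∀ z : Z, 0 ≤ z → R n z ∈ P)
    (hWOT : ∀ (x : X) (φ : X →L[ℝ] ℝ),
      Tendsto (fun n => φ (R n (J x))) atTop (𝓝 (φ x))) :
    -- `span(X'₊)` is a vector lattice:
    (∀ f : X →L[ℝ] ℝ, inDualSpan P f → ∃ m, IsDualModulus P f m) ∧
    -- there is a lattice norm equivalent to the span norm:
    (∃ N : (X →L[ℝ] ℝ) → ℝ, ∃ c₁ > (0 : ℝ), ∃ c₂ > (0 : ℝ),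
      (∀ f, inDualSpan P f →
        c₁ * dualSpanNorm P f ≤ N f ∧ N f ≤ c₂ * dualSpanNorm P f) ∧
      (∀ f g mf mg, inDualSpan P f → inDualSpan P g →
        IsDualModulus P f mf → IsDualModulus P g mg → dualLE P mf mg → N f ≤ N g)) ∧
    -- monotone completeness: increasing span-norm-bounded nets in `X'₊` have suprema:
    (∀ (ι : Type) [Nonempty ι] [SemilatticeSup ι] (g : ι → X →L[ℝ] ℝ),
      (∀ i, dualPos P (g i)) →
      (∀ i j, i ≤ j → dualLE P (g i) (g j)) →
      (∃ b : ℝ, ∀ i, dualSpanNorm P (g i) ≤ b) →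
      ∃ s : X →L[ℝ] ℝ, inDualSpan P s ∧ (∀ i, dualLE P (g i) s) ∧
        ∀ u : X →L[ℝ] ℝ, inDualSpan P u → (∀ i, dualLE P (g i) u) → dualLE P s u) :=
  stmt10_general P hPsmul hgen J hJ R hR hWOT
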